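/- Let φ be a summable function on a countable Markov shift X with β_∞(φ) < 1, and let P(φ) be finite. Define F(μ) = -P(φ) + h(μ) + ∫φ dμ for shift-invariant probability measures μ with ∫φ dμ > -∞. If (μ_k) is a sequence of such measures for which F(μ_k) converges to a finite number as k → ∞, then inf_{k≥1} ∫φ dμ_k > -∞. -/

import Mathlib

open Filter

/-
Fix `c` strictly between `β_∞(φ)` and `1`. Measures with `h(μ)/(-∫φ dμ) > c` have
`∫φ dμ ≥ K` by the previous lemma. For the others `h(μ) ≤ c·(-∫φ dμ)`, so
`F(μ) ≤ -P(φ) + (1 - c)∫φ dμ`; since a convergent sequence `F(μ_k)` is bounded below,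
this bounds `∫φ dμ_k` below as well.
-/

theorem div_one_sub_le_of_div_neg_le {e x c b : ℝ} (hc : c < 1) (hx : x < 0)
    (hratio : e / (-x) ≤ c) (hb : b ≤ e + x) : b / (1 - c) ≤ x := by
  have hent : e ≤ c * (-x) := (div_le_iff₀ (neg_pos.mpr hx)).mp hratio
  rw [div_le_iff₀ (sub_pos.mpr hc)]
  linarith

theorem stmt5_general {M : Type*} (ent intφ : M → ℝ)
    (βinf : ℝ) (hβ1 : βinf < 1)
    (hlem : ∀ δ : ℝ, 0 < δ → ∃ K : ℝ, ∀ μ : M,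
      ent μ / (-intφ μ) > βinf + δ → intφ μ ≥ K)
    (Pφ L : ℝ) (μ : ℕ → M)
    (hF : Tendsto (fun k => -Pφ + ent (μ k) + intφ (μ k)) atTop (nhds L)) :
    BddBelow (Set.range fun k => intφ (μ k)) := by
  set c := βinf + (1 - βinf) / 2 with hc_def
  have hc : c < 1 := by linarith [hc_def]
  obtain ⟨K, hK⟩ := hlem ((1 - βinf) / 2) (by linarith)
  obtain ⟨B, hB⟩ := hF.isBoundedUnder_ge.bddBelow_range
  refine ⟨min K (min 0 ((B + Pφ) / (1 - c))), ?_⟩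
  rintro _ ⟨k, rfl⟩
  rcases le_or_gt 0 (intφ (μ k)) with hnonneg | hneg
  · exact (min_le_right _ _).trans ((min_le_left _ _).trans hnonneg)
  by_cases hratio : ent (μ k) / (-intφ (μ k)) > c
  · exact (min_le_left _ _).trans (hK _ hratio)
  · have hFk : B ≤ -Pφ + ent (μ k) + intφ (μ k) := hB ⟨k, rfl⟩
    refine (min_le_right _ _).trans ((min_le_right _ _).trans ?_)
    exact div_one_sub_le_of_div_neg_le hc hneg (not_lt.mp hratio) (by linarith)

/-- Abstract form of Lemma 2.2. Let `M` stand for the set of shift-invariant Borel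
probability measures `μ` with `∫φ dμ > -∞` on the countable Markov shift, with
entropy `ent μ = h(μ) ≥ 0` and integral `intφ μ = ∫φ dμ ∈ ℝ`, where `φ` is
summable with `β_∞(φ) = βinf < 1` (and `βinf ≥ 0`). Assume the conclusion of the
previous lemma: for every `δ > 0` there is `K(δ)` such that `ent μ/(-intφ μ) > βinf + δ`
implies `intφ μ ≥ K(δ)`. Let `P(φ) = Pφ ∈ ℝ` and `F(μ) = -P(φ) + h(μ) + ∫φ dμ`.
If `(μ_k)` is a sequence in `M` with `F(μ_k)` converging to a finite number `L`,
then `inf_k ∫φ dμ_k > -∞`. -/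
theorem stmt5 {M : Type*} (ent intφ : M → ℝ)
    (hent : ∀ μ : M, 0 ≤ ent μ)
    (βinf : ℝ) (hβ0 : 0 ≤ βinf) (hβ1 : βinf < 1)
    (hlem : ∀ δ : ℝ, 0 < δ → ∃ K : ℝ, ∀ μ : M,
      ent μ / (-intφ μ) > βinf + δ → intφ μ ≥ K)
    (Pφ L : ℝ) (μ : ℕ → M)
    (hF : Tendsto (fun k => -Pφ + ent (μ k) + intφ (μ k)) atTop (nhds L)) :
    BddBelow (Set.range fun k => intφ (μ k)) :=
  stmt5_general ent intφ βinf hβ1 hlem Pφ L μ hF
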